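/- For θ ∈ (0, π], the equation h(θ) = −3/2 holds if and only if θ = π or θ = 2·arcsin((√2 − 1)/2). (The angle Θ₀ = 2·arcsin((√2 − 1)/2) ≈ 23.9° is, at leading order in ε, the minimal libration angle of the tadpole region, i.e., the crossing of the separatrix emanating from L₃ with the exact-resonance section.) -/
import Mathlib


open Real

/-- The averaged co-orbital perturbation on quasi-circular orbits at exact resonance
(up to the factor `ε`): `h(θ) = cos θ - (2 - 2cos θ)^{-1/2}`. -/
noncomputable def hfun (θ : ℝ) : ℝ := cos θ - 1 / Real.sqrt (2 - 2 * cos θ)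

/-- For `θ ∈ (0, π]`, `h(θ) = -3/2` holds exactly for `θ = π` and for
`θ = Θ₀ = 2·arcsin((√2 - 1)/2)`, the minimal libration angle of the tadpole region. -/
theorem hfun_eq_neg_three_halves_iff :
    ∀ θ ∈ Set.Ioc (0 : ℝ) π,
      (hfun θ = -(3 / 2) ↔ θ = π ∨ θ = 2 * arcsin ((Real.sqrt 2 - 1) / 2)) := by
  rintro θ ⟨hθ0, hθπ⟩
  have hpi := Real.pi_pos
  set s := Real.sin (θ / 2) with hs
  have hhalf1 : 0 < θ / 2 := by linarith
  have hhalf2 : θ / 2 ≤ π / 2 := by linarith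
  have hs0 : 0 < s := Real.sin_pos_of_pos_of_lt_pi hhalf1 (by linarith)
  have hsq2 : Real.sqrt 2 ^ 2 = 2 := Real.sq_sqrt (by norm_num)
  have hsq2pos : 0 < Real.sqrt 2 := Real.sqrt_pos.mpr (by norm_num)
  have hsq2gt : (1 : ℝ) < Real.sqrt 2 := by nlinarith [hsq2, hsq2pos]
  have hcos : Real.cos θ = 1 - 2 * s ^ 2 := by
    have h1 : Real.cos (2 * (θ / 2)) = 2 * Real.cos (θ / 2) ^ 2 - 1 := Real.cos_two_mul _
    have h2 : Real.sin (θ / 2) ^ 2 + Real.cos (θ / 2) ^ 2 = 1 := Real.sin_sq_add_cos_sq _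
    have h3 : 2 * (θ / 2) = θ := by ring
    rw [h3] at h1
    rw [hs]; linarith
  have hsqrt : Real.sqrt (2 - 2 * Real.cos θ) = 2 * s := by
    rw [hcos]
    have h4 : 2 - 2 * (1 - 2 * s ^ 2) = (2 * s) ^ 2 := by ring
    rw [h4, Real.sqrt_sq (by linarith)]
  have key : hfun θ = -(3 / 2) ↔ s = 1 ∨ s = (Real.sqrt 2 - 1) / 2 := by
    rw [hfun, hsqrt, hcos]
    have hne : (2 : ℝ) * s ≠ 0 := by positivity
    constructor
    · intro h
      have hcubic : 4 * s ^ 3 - 5 * s + 1 = 0 := by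
        field_simp at h
        nlinarith [h]
      have hpoly : (s - 1) * ((2 * s - (Real.sqrt 2 - 1)) * (2 * s + (Real.sqrt 2 + 1))) = 0 := by
        nlinarith [hcubic, hsq2]
      rcases mul_eq_zero.mp hpoly with h1 | h2
      · left; linarith
      · rcases mul_eq_zero.mp h2 with h3 | h4
        · right; linarith
        · exfalso; nlinarith [hsq2pos, hs0]
    · rintro (h | h)
      · rw [h]; norm_num
      · rw [h]
        have hne2 : Real.sqrt 2 - 1 ≠ 0 := by linarith
        field_simp
        nlinarith [hsq2]
  rw [key]
  have harcsin : arcsin s = θ / 2 := Real.arcsin_sin (by linarith) hhalf2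
  constructor
  · rintro (h | h)
    · left
      have h1 : arcsin (1 : ℝ) = π / 2 := Real.arcsin_one
      rw [h, h1] at harcsin; linarith
    · right
      rw [h] at harcsin; linarith
  · rintro (h | h)
    · left
      rw [hs, h]
      norm_num
    · right
      rw [hs, h]
      have hb1 : -1 ≤ (Real.sqrt 2 - 1) / 2 := by nlinarith
      have hb2 : (Real.sqrt 2 - 1) / 2 ≤ 1 := by nlinarith
      rw [show (2 * arcsin ((Real.sqrt 2 - 1) / 2)) / 2 = arcsin ((Real.sqrt 2 - 1) / 2) by ring]
      exact Real.sin_arcsin hb1 hb2
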